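/- Let (π_t)_{t=0}^{T} be a sequence of reals in (0,1] with π_0 ≥ 1/4. Suppose each step t is either a 'select' step with π_{t+1} ≥ n^{−2}·π_t (for a fixed integer n ≥ 2) or a 'deduct' step with π_{t+1} ≥ 2·π_t. Let w be the number of select steps and d the number of deduct steps among the first T steps. Then d ≤ 2 + (2·log₂ n)·w. -/

import Mathlib

/-!
`log₂ π` is a potential: a select step lowers it by at most `2 log₂ n`, a deduct step raises it
by at least `1`, it starts at `≥ -2` and never exceeds `0` because `π ≤ 1`. Counting the net
change over the `T` steps bounds the deduct steps.
-/

open Finset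

theorem card_filter_false_le_of_potential {L : ℕ → ℝ} {a : ℝ} {sel : ℕ → Bool} {T : ℕ}
    (hL : ∀ t < T, (sel t = true → L t - a ≤ L (t + 1)) ∧ (sel t = false → L t + 1 ≤ L (t + 1))) :
    (#{t ∈ range T | sel t = false} : ℝ) ≤ a * #{t ∈ range T | sel t = true} + (L T - L 0) := by
  have hsum : ∑ t ∈ range T, (if sel t = true then -a else 1) ≤
      ∑ t ∈ range T, (L (t + 1) - L t) := by
    refine sum_le_sum fun t ht => ?_
    have ⟨hsel, hded⟩ := hL t (mem_range.mp ht)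
    split_ifs with hs
    · linarith [hsel hs]
    · linarith [hded (by simpa using hs)]
  rw [sum_range_sub, sum_ite, sum_const, sum_const] at hsum
  simp only [Bool.not_eq_true, nsmul_eq_mul, mul_neg, mul_one] at hsum
  linarith

open Real in
theorem Real.logb_add_logb_le_of_mul_le {b c x y : ℝ} (hb : 1 < b) (hc : 0 < c) (hx : 0 < x)
    (h : c * x ≤ y) : logb b c + logb b x ≤ logb b y := by
  rw [← logb_mul hc.ne' hx.ne']
  exact logb_le_logb_of_le hb (by positivity) h

theorem stmt_5 (n T : ℕ) (hn : 2 ≤ n) (π : ℕ → ℝ) (sel : ℕ → Bool)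
    (hpos : ∀ t ≤ T, 0 < π t ∧ π t ≤ 1) (h0 : (1:ℝ)/4 ≤ π 0)
    (hstep : ∀ t < T,
      (sel t = true ∧ π (t+1) ≥ ((n : ℝ))⁻¹ ^ 2 * π t) ∨
      (sel t = false ∧ π (t+1) ≥ 2 * π t)) :
    (((Finset.range T).filter (fun t => sel t = false)).card : ℝ) ≤
      2 + (2 * Real.logb 2 n) * (((Finset.range T).filter (fun t => sel t = true)).card : ℝ) := by
  have hn0 : (0 : ℝ) < n := by exact_mod_cast (show 0 < n by omega)
  have hL : ∀ t < T,
      (sel t = true → Real.logb 2 (π t) - 2 * Real.logb 2 n ≤ Real.logb 2 (π (t + 1))) ∧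
      (sel t = false → Real.logb 2 (π t) + 1 ≤ Real.logb 2 (π (t + 1))) := by
    intro t ht
    have hπt := (hpos t ht.le).1
    rcases hstep t ht with ⟨hs, hge⟩ | ⟨hs, hge⟩
    · refine ⟨fun _ => ?_, by simp [hs]⟩
      have := Real.logb_add_logb_le_of_mul_le one_lt_two (by positivity) hπt hge
      rw [inv_pow, Real.logb_inv, Real.logb_pow] at this
      push_cast at this
      linarith
    · refine ⟨by simp [hs], fun _ => ?_⟩
      have := Real.logb_add_logb_le_of_mul_le one_lt_two two_pos hπt hge
      rwa [Real.logb_self_eq_one one_lt_two, add_comm] at this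
  have hLT : Real.logb 2 (π T) ≤ 0 :=
    Real.logb_nonpos one_lt_two (hpos T le_rfl).1.le (hpos T le_rfl).2
  have hL0 : -2 ≤ Real.logb 2 (π 0) := by
    rw [Real.le_logb_iff_rpow_le one_lt_two (hpos 0 (Nat.zero_le T)).1]
    calc (2 : ℝ) ^ (-2 : ℝ) = 1 / 4 := by norm_num [Real.rpow_neg]
      _ ≤ π 0 := h0
  linarith [card_filter_false_le_of_potential hL]
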